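/- arXiv:math/0404209 — 5 statements merged into one kernel-verified Lean document; each statement's English description precedes it below -/
import Mathlib

section
/- For all positive integers n, m and any x (in a field of rational functions in q, with q not a root of unity), the alternating sum ∑_{i=1}^n [n choose i]_q (-1)^{i-1} (x+1)(x+q)⋯(x+q^{i-1}) q^{mi}/(1-q^i)^m equals ∑_{i=1}^n (1-(-x)^i) q^i/(1-q^i) ∑_{i ≤ i_2 ≤ ⋯ ≤ i_m ≤ n} q^{i_2}/(1-q^{i_2}) ⋯ q^{i_m}/(1-q^{i_m}). -/
open Finset

/-- The q-Pochhammer symbol `(a;q)_n = (1-a)(1-aq)⋯(1-aq^{n-1})`. -/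
noncomputable def qPoch {K : Type*} [Field K] (q a : K) (n : ℕ) : K :=
  ∏ k ∈ Finset.range n, (1 - a * q ^ k)

/-- The Gaussian binomial coefficient `[n choose i]_q = (q;q)_n / ((q;q)_i (q;q)_{n-i})`. -/
noncomputable def qBinom {K : Type*} [Field K] (q : K) (n i : ℕ) : K :=
  qPoch q q n / (qPoch q q i * qPoch q q (n - i))

/-- `wsum f m lo n = ∑_{lo ≤ i₁ ≤ i₂ ≤ ⋯ ≤ i_m ≤ n} f i₁ ⋯ f i_m`
(sum over weakly increasing `m`-tuples; the empty sum for `m = 0` is `1`). -/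
noncomputable def wsum {K : Type*} [Field K] (f : ℕ → K) : ℕ → ℕ → ℕ → K
  | 0, _, _ => 1
  | m + 1, lo, n => ∑ j ∈ Finset.Icc lo n, f j * wsum f m j n

namespace FLaux

variable {K : Type*} [Field K]

lemma sub_ne (q : K) (hq : ∀ k : ℕ, 0 < k → q ^ k ≠ 1) (k : ℕ) (hk : 0 < k) :
    (1 : K) - q ^ k ≠ 0 :=
  sub_ne_zero.mpr fun h => hq k hk h.symm

lemma qPoch_succ (q : K) (n : ℕ) :
    qPoch q q (n + 1) = qPoch q q n * (1 - q ^ (n + 1)) := by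
  rw [qPoch, Finset.prod_range_succ, ← qPoch]
  ring

@[simp] lemma qPoch_zero (q a : K) : qPoch q a 0 = 1 := by simp [qPoch]

lemma qPoch_ne_zero (q : K) (hq : ∀ k : ℕ, 0 < k → q ^ k ≠ 1) (n : ℕ) :
    qPoch q q n ≠ 0 := by
  induction n with
  | zero => simp
  | succ n ih =>
    rw [qPoch_succ]
    exact mul_ne_zero ih (sub_ne q hq (n + 1) n.succ_pos)

lemma qBinom_zero (q : K) (hq : ∀ k : ℕ, 0 < k → q ^ k ≠ 1) (n : ℕ) :
    qBinom q n 0 = 1 := by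
  rw [qBinom]
  simp [div_self (mul_ne_zero (qPoch_ne_zero q hq n) (one_ne_zero)), qPoch_ne_zero q hq n]

lemma qBinom_self (q : K) (hq : ∀ k : ℕ, 0 < k → q ^ k ≠ 1) (n : ℕ) :
    qBinom q n n = 1 := by
  rw [qBinom]
  simp [qPoch_ne_zero q hq n]

lemma E1 (q : K) (hq : ∀ k : ℕ, 0 < k → q ^ k ≠ 1) (n i : ℕ) :
    qBinom q (n + 1) (i + 1) * (1 - q ^ (i + 1)) = qBinom q n i * (1 - q ^ (n + 1)) := by
  have h1 : qPoch q q i ≠ 0 := qPoch_ne_zero q hq i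
  have h2 : qPoch q q (n - i) ≠ 0 := qPoch_ne_zero q hq _
  have h3 : (1 : K) - q ^ (i + 1) ≠ 0 := sub_ne q hq _ i.succ_pos
  rw [qBinom, qBinom, qPoch_succ, qPoch_succ, Nat.succ_sub_succ]
  field_simp

lemma E2 (q : K) (hq : ∀ k : ℕ, 0 < k → q ^ k ≠ 1) (n i : ℕ) (h : i ≤ n) :
    qBinom q (n + 1) i * (1 - q ^ (n + 1 - i)) = qBinom q n i * (1 - q ^ (n + 1)) := by
  have h1 : qPoch q q i ≠ 0 := qPoch_ne_zero q hq i
  have h2 : qPoch q q (n - i) ≠ 0 := qPoch_ne_zero q hq _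
  have h3 : (1 : K) - q ^ (n - i + 1) ≠ 0 := sub_ne q hq _ (Nat.succ_pos _)
  have e : n + 1 - i = (n - i) + 1 := by omega
  rw [qBinom, qBinom, qPoch_succ, e, qPoch_succ]
  field_simp

lemma pascal1succ (q : K) (hq : ∀ k : ℕ, 0 < k → q ^ k ≠ 1) (n j : ℕ) (h : j + 1 ≤ n) :
    qBinom q (n + 1) (j + 1) = qBinom q n (j + 1) + q ^ (n - j) * qBinom q n j := by
  have hN : (1 : K) - q ^ (n + 1) ≠ 0 := sub_ne q hq _ n.succ_pos
  have e1 := E1 q hq n j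
  have e2 : qBinom q (n + 1) (j + 1) * (1 - q ^ (n - j)) = qBinom q n (j + 1) * (1 - q ^ (n + 1)) := by
    have := E2 q hq n (j + 1) h
    rwa [show n + 1 - (j + 1) = n - j from by omega] at this
  have hpow : q ^ (j + 1) * q ^ (n - j) = q ^ (n + 1) := by
    rw [← pow_add]; congr 1; omega
  apply mul_right_cancel₀ hN
  linear_combination qBinom q (n + 1) (j + 1) * hpow + e2 + q ^ (n - j) * e1

lemma pascal2succ (q : K) (hq : ∀ k : ℕ, 0 < k → q ^ k ≠ 1) (n j : ℕ) (h : j + 1 ≤ n) :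
    qBinom q (n + 1) (j + 1) = q ^ (j + 1) * qBinom q n (j + 1) + qBinom q n j := by
  have hN : (1 : K) - q ^ (n + 1) ≠ 0 := sub_ne q hq _ n.succ_pos
  have e1 := E1 q hq n j
  have e2 : qBinom q (n + 1) (j + 1) * (1 - q ^ (n - j)) = qBinom q n (j + 1) * (1 - q ^ (n + 1)) := by
    have := E2 q hq n (j + 1) h
    rwa [show n + 1 - (j + 1) = n - j from by omega] at this
  have hpow : q ^ (j + 1) * q ^ (n - j) = q ^ (n + 1) := by
    rw [← pow_add]; congr 1; omega
  apply mul_right_cancel₀ hN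
  linear_combination qBinom q (n + 1) (j + 1) * hpow + q ^ (j + 1) * e2 + e1

/-- Product `(x+1)(x+q)⋯(x+q^{i-1})`. -/
noncomputable def P (q x : K) (i : ℕ) : K := ∏ j ∈ Finset.range i, (x + q ^ j)

@[simp] lemma P_zero (q x : K) : P q x 0 = 1 := by simp [P]

lemma P_succ (q x : K) (j : ℕ) : P q x (j + 1) = P q x j * (x + q ^ j) :=
  Finset.prod_range_succ _ _

/-- `F q i = q^i / (1 - q^i)`. -/
noncomputable def F (q : K) (i : ℕ) : K := q ^ i / (1 - q ^ i)

lemma lemT (q : K) (hq : ∀ k : ℕ, 0 < k → q ^ k ≠ 1) (n j : ℕ) (h : j ≤ n) :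
    qBinom q (n + 1) (j + 1) * F q (n + 1) = q ^ (n - j) * qBinom q n j * F q (j + 1) := by
  have e1 := E1 q hq n j
  have hd1 : (1 : K) - q ^ (j + 1) ≠ 0 := sub_ne q hq _ j.succ_pos
  have hdN : (1 : K) - q ^ (n + 1) ≠ 0 := sub_ne q hq _ n.succ_pos
  have hpow : q ^ (n - j) * q ^ (j + 1) = q ^ (n + 1) := by
    rw [← pow_add]; congr 1; omega
  rw [F, F]
  field_simp
  linear_combination q ^ (n + 1) * e1 - qBinom q n j * (1 - q ^ (n + 1)) * hpow

/-- The q-binomial-theorem-type identity `∑ (-1)^i [n,i] (x+1)⋯(x+q^{i-1}) = (-x)^n`. -/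
lemma Sp (q x : K) (hq : ∀ k : ℕ, 0 < k → q ^ k ≠ 1) :
    ∀ n, ∑ i ∈ range (n + 1), (-1 : K) ^ i * qBinom q n i * P q x i = (-x) ^ n := by
  intro n
  induction n with
  | zero => simp [qBinom]
  | succ n ih =>
    have hB0n : qBinom q n 0 = 1 := qBinom_zero q hq n
    have hB0 : qBinom q (n + 1) 0 = 1 := qBinom_zero q hq (n + 1)
    have hBtop : qBinom q (n + 1) (n + 1) = 1 := qBinom_self q hq (n + 1)
    have hBnn : qBinom q n n = 1 := qBinom_self q hq n
    rw [Finset.sum_range_succ, Finset.sum_range_succ']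
    have hsplit : ∀ j ∈ range n, (-1 : K) ^ (j + 1) * qBinom q (n + 1) (j + 1) * P q x (j + 1)
        = ((-1 : K) ^ (j + 1) * q ^ (j + 1) * qBinom q n (j + 1) * P q x (j + 1))
          + ((-1 : K) ^ (j + 1) * qBinom q n j * P q x (j + 1)) := by
      intro j hj
      rw [pascal2succ q hq n j (by simpa using Finset.mem_range.mp hj)]
      ring
    rw [Finset.sum_congr rfl hsplit, Finset.sum_add_distrib]
    have hU : (∑ j ∈ range n, ((-1 : K) ^ (j + 1) * q ^ (j + 1) * qBinom q n (j + 1) * P q x (j + 1)))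
        = (∑ i ∈ range (n + 1), (-1 : K) ^ i * q ^ i * qBinom q n i * P q x i) - 1 := by
      rw [Finset.sum_range_succ' (fun i => (-1 : K) ^ i * q ^ i * qBinom q n i * P q x i) n]
      simp [hB0n]
    have hW : (∑ j ∈ range n, ((-1 : K) ^ (j + 1) * qBinom q n j * P q x (j + 1)))
        = (∑ j ∈ range (n + 1), (-1 : K) ^ (j + 1) * qBinom q n j * P q x (j + 1))
          - (-1 : K) ^ (n + 1) * P q x (n + 1) := by
      rw [Finset.sum_range_succ, hBnn]
      ring
    have hWval : (∑ j ∈ range (n + 1), (-1 : K) ^ (j + 1) * qBinom q n j * P q x (j + 1))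
        = -x * (∑ i ∈ range (n + 1), (-1 : K) ^ i * qBinom q n i * P q x i)
          - (∑ i ∈ range (n + 1), (-1 : K) ^ i * q ^ i * qBinom q n i * P q x i) := by
      have hterm : ∀ j ∈ range (n + 1), (-1 : K) ^ (j + 1) * qBinom q n j * P q x (j + 1)
          = -x * ((-1 : K) ^ j * qBinom q n j * P q x j)
            - ((-1 : K) ^ j * q ^ j * qBinom q n j * P q x j) := by
        intro j _
        rw [P_succ]
        ring
      rw [Finset.sum_congr rfl hterm, Finset.sum_sub_distrib, ← Finset.mul_sum]
    rw [hB0, hBtop]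
    simp only [pow_zero, one_mul, mul_one, P_zero]
    linear_combination hU + hW + hWval - x * ih

/-- Left side as a `range` sum. -/
noncomputable def Lg (q x : K) (n m : ℕ) : K :=
  ∑ j ∈ range n, qBinom q n (j + 1) * ((-1 : K) ^ j * P q x (j + 1)) * (F q (j + 1)) ^ m

/-- Right side as a `range` sum. -/
noncomputable def Rg (q x : K) (n m : ℕ) : K :=
  ∑ j ∈ range n, (1 - (-x) ^ (j + 1)) * F q (j + 1) * wsum (F q) m (j + 1) n

lemma Lg0 (q x : K) (hq : ∀ k : ℕ, 0 < k → q ^ k ≠ 1) (n : ℕ) :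
    Lg q x n 0 = 1 - (-x) ^ n := by
  have hs := Sp q x hq n
  rw [Finset.sum_range_succ'] at hs
  have hB0n : qBinom q n 0 = 1 := qBinom_zero q hq n
  rw [hB0n] at hs
  simp only [pow_zero, one_mul, mul_one, P_zero] at hs
  unfold Lg
  have hc : ∀ j ∈ range n, qBinom q n (j + 1) * ((-1 : K) ^ j * P q x (j + 1)) * (F q (j + 1)) ^ 0
      = -((-1 : K) ^ (j + 1) * qBinom q n (j + 1) * P q x (j + 1)) := by
    intro j _
    ring
  rw [Finset.sum_congr rfl hc, Finset.sum_neg_distrib]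
  linear_combination -hs

lemma Lrec (q x : K) (hq : ∀ k : ℕ, 0 < k → q ^ k ≠ 1) (n m : ℕ) :
    Lg q x (n + 1) (m + 1) = Lg q x n (m + 1) + F q (n + 1) * Lg q x (n + 1) m := by
  unfold Lg
  rw [Finset.sum_range_succ
    (fun j => qBinom q (n + 1) (j + 1) * ((-1 : K) ^ j * P q x (j + 1)) * (F q (j + 1)) ^ (m + 1)) n,
    Finset.sum_range_succ
    (fun j => qBinom q (n + 1) (j + 1) * ((-1 : K) ^ j * P q x (j + 1)) * (F q (j + 1)) ^ m) n]
  have hsplit : ∀ j ∈ range n,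
      qBinom q (n + 1) (j + 1) * ((-1 : K) ^ j * P q x (j + 1)) * (F q (j + 1)) ^ (m + 1)
      = qBinom q n (j + 1) * ((-1 : K) ^ j * P q x (j + 1)) * (F q (j + 1)) ^ (m + 1)
        + F q (n + 1) * (qBinom q (n + 1) (j + 1) * ((-1 : K) ^ j * P q x (j + 1)) * (F q (j + 1)) ^ m) := by
    intro j hj
    have hjn : j + 1 ≤ n := by simpa using Finset.mem_range.mp hj
    have hp1 := pascal1succ q hq n j hjn
    have ht := lemT q hq n j (by omega)
    linear_combination (((-1 : K) ^ j * P q x (j + 1)) * (F q (j + 1)) ^ (m + 1)) * hp1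
      - (((-1 : K) ^ j * P q x (j + 1)) * (F q (j + 1)) ^ m) * ht
  rw [Finset.sum_congr rfl hsplit, Finset.sum_add_distrib, ← Finset.mul_sum]
  ring

lemma wsum_top (f : ℕ → K) (n : ℕ) : ∀ m lo, lo ≤ n + 1 →
    wsum f (m + 1) lo (n + 1) = wsum f (m + 1) lo n + f (n + 1) * wsum f m lo (n + 1) := by
  intro m
  induction m with
  | zero =>
    intro lo hlo
    simp only [wsum, mul_one]
    rw [Finset.sum_Icc_succ_top hlo]
  | succ m ih =>
    intro lo hlo
    show (∑ j ∈ Icc lo (n + 1), f j * wsum f (m + 1) j (n + 1)) = _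
    have hsplit : ∀ j ∈ Icc lo (n + 1), f j * wsum f (m + 1) j (n + 1)
        = f j * wsum f (m + 1) j n + f (n + 1) * (f j * wsum f m j (n + 1)) := by
      intro j hj
      rw [ih j (Finset.mem_Icc.mp hj).2]
      ring
    rw [Finset.sum_congr rfl hsplit, Finset.sum_add_distrib, ← Finset.mul_sum]
    have h1 : (∑ j ∈ Icc lo (n + 1), f j * wsum f (m + 1) j n) = wsum f (m + 2) lo n := by
      show _ = ∑ j ∈ Icc lo n, f j * wsum f (m + 1) j n
      rw [Finset.sum_Icc_succ_top hlo]
      have h0 : wsum f (m + 1) (n + 1) n = 0 := by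
        show (∑ i ∈ Icc (n + 1) n, f i * wsum f m i n) = 0
        rw [Finset.Icc_eq_empty (by omega), Finset.sum_empty]
      rw [h0, mul_zero, add_zero]
    rw [h1]
    rfl

lemma Rrec (q x : K) (n m : ℕ) :
    Rg q x (n + 1) (m + 1) = Rg q x n (m + 1) + F q (n + 1) * Rg q x (n + 1) m := by
  unfold Rg
  have hsplit : ∀ j ∈ range (n + 1),
      (1 - (-x) ^ (j + 1)) * F q (j + 1) * wsum (F q) (m + 1) (j + 1) (n + 1)
      = (1 - (-x) ^ (j + 1)) * F q (j + 1) * wsum (F q) (m + 1) (j + 1) n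
        + F q (n + 1) * ((1 - (-x) ^ (j + 1)) * F q (j + 1) * wsum (F q) m (j + 1) (n + 1)) := by
    intro j hj
    rw [wsum_top (F q) n m (j + 1) (by have := Finset.mem_range.mp hj; omega)]
    ring
  rw [Finset.sum_congr rfl hsplit, Finset.sum_add_distrib, ← Finset.mul_sum]
  have h0 : wsum (F q) (m + 1) (n + 1) n = 0 := by
    show (∑ i ∈ Icc (n + 1) n, F q i * wsum (F q) m i n) = 0
    rw [Finset.Icc_eq_empty (by omega), Finset.sum_empty]
  rw [Finset.sum_range_succ
    (fun j => (1 - (-x) ^ (j + 1)) * F q (j + 1) * wsum (F q) (m + 1) (j + 1) n) n, h0]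
  ring

lemma R0rec (q x : K) (n : ℕ) :
    Rg q x (n + 1) 0 = Rg q x n 0 + (1 - (-x) ^ (n + 1)) * F q (n + 1) := by
  unfold Rg
  rw [Finset.sum_range_succ]
  simp [wsum]

lemma main (q x : K) (hq : ∀ k : ℕ, 0 < k → q ^ k ≠ 1) :
    ∀ μ n, Lg q x n (μ + 1) = Rg q x n μ := by
  intro μ
  induction μ with
  | zero =>
    intro n
    induction n with
    | zero => simp [Lg, Rg]
    | succ n ih =>
      rw [Lrec q x hq n 0, ih, Lg0 q x hq (n + 1), R0rec q x n]
      ring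
  | succ μ ihμ =>
    intro n
    induction n with
    | zero => simp [Lg, Rg]
    | succ n ih =>
      rw [Lrec q x hq n (μ + 1), ih, ihμ (n + 1), Rrec q x n μ]

lemma sum_Icc_one (g : ℕ → K) : ∀ n, ∑ i ∈ Finset.Icc 1 n, g i = ∑ j ∈ Finset.range n, g (j + 1)
  | 0 => by simp
  | n + 1 => by
    rw [Finset.sum_Icc_succ_top (by omega), Finset.sum_range_succ, sum_Icc_one g n]

end FLaux

/-- First Fu–Lascoux identity. -/
theorem fu_lascoux_one {K : Type*} [Field K] (q x : K)
    (hq : ∀ k : ℕ, 0 < k → q ^ k ≠ 1) (n m : ℕ) (hn : 1 ≤ n) (hm : 1 ≤ m) :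
    ∑ i ∈ Icc 1 n, qBinom q n i * (-1 : K) ^ (i - 1) *
        (∏ j ∈ range i, (x + q ^ j)) * q ^ (m * i) / (1 - q ^ i) ^ m
      = ∑ i ∈ Icc 1 n, (1 - (-x) ^ i) * (q ^ i / (1 - q ^ i)) *
          wsum (fun j => q ^ j / (1 - q ^ j)) (m - 1) i n := by
  obtain ⟨μ, rfl⟩ : ∃ μ, m = μ + 1 := ⟨m - 1, by omega⟩
  simp only [FLaux.sum_Icc_one]
  have hF : (fun j : ℕ => q ^ j / (1 - q ^ j)) = FLaux.F q := rfl
  calc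
    ∑ j ∈ range n, qBinom q n (j + 1) * (-1 : K) ^ (j + 1 - 1) *
        (∏ k ∈ range (j + 1), (x + q ^ k)) * q ^ ((μ + 1) * (j + 1)) / (1 - q ^ (j + 1)) ^ (μ + 1)
        = FLaux.Lg q x n (μ + 1) := by
      unfold FLaux.Lg
      refine Finset.sum_congr rfl fun j _ => ?_
      simp only [Nat.add_sub_cancel, FLaux.F, FLaux.P]
      rw [show (μ + 1) * (j + 1) = (j + 1) * (μ + 1) from by ring, pow_mul, div_pow,
        div_eq_mul_inv, div_eq_mul_inv]
      ring
    _ = FLaux.Rg q x n μ := FLaux.main q x hq μ n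
    _ = ∑ j ∈ range n, (1 - (-x) ^ (j + 1)) * (q ^ (j + 1) / (1 - q ^ (j + 1))) *
          wsum (fun j => q ^ j / (1 - q ^ j)) (μ + 1 - 1) (j + 1) n := by
      unfold FLaux.Rg
      refine Finset.sum_congr rfl fun j _ => ?_
      simp only [Nat.add_sub_cancel, hF, FLaux.F]
end

section
/- For every positive integer n and m ≥ 1, ∑_{i=1}^n [n choose i]_q (-1)^{i-1} q^{binom(i,2)+mi} / (1-q^i)^m = ∑_{1 ≤ i_1 ≤ i_2 ≤ ⋯ ≤ i_m ≤ n} (q^{i_1}/(1-q^{i_1})) ⋯ (q^{i_m}/(1-q^{i_m})) (Dilcher's identity). -/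
/-!
Write `f j = q^j / (1 - q^j)`. Both sides of the identity, as functions `S n m`, satisfy
`S (n+1) (m+1) = S n (m+1) + f (n+1) * S (n+1) m`, vanish at `n = 0` for `m ≥ 1` and equal `1`
at `m = 0` for `n ≥ 1`. For the multiple sum this is splitting off the tuples with `i_m = n+1`.
For the alternating sum the recursion is termwise, by
`([n+1, i] - [n, i]) f i = f (n+1) [n+1, i]`, and the value at `m = 0` is the q-binomial theorem
`∑ [n, i] q^(i choose 2) x^i = (-x; q)_n` at `x = -1`.
-/

open Finset

section

variable {K : Type*} [Field K] {q : K}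

lemma qPoch_zero_self : qPoch q q 0 = 1 := by
  simp [qPoch]

lemma qPoch_succ_self (n : ℕ) : qPoch q q (n + 1) = qPoch q q n * (1 - q ^ (n + 1)) := by
  rw [qPoch, qPoch, prod_range_succ, ← pow_succ']

lemma one_sub_pow_ne_zero (hq : ∀ k : ℕ, 0 < k → q ^ k ≠ 1) {k : ℕ} (hk : 0 < k) :
    1 - q ^ k ≠ 0 :=
  sub_ne_zero.mpr (hq k hk).symm

lemma qPoch_self_ne_zero (hq : ∀ k : ℕ, 0 < k → q ^ k ≠ 1) (n : ℕ) : qPoch q q n ≠ 0 := by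
  induction n with
  | zero => simp [qPoch_zero_self]
  | succ n ih => rw [qPoch_succ_self]; exact mul_ne_zero ih (one_sub_pow_ne_zero hq n.succ_pos)

lemma qBinom_zero_right (hq : ∀ k : ℕ, 0 < k → q ^ k ≠ 1) (n : ℕ) : qBinom q n 0 = 1 := by
  rw [qBinom, Nat.sub_zero, qPoch_zero_self, one_mul, div_self (qPoch_self_ne_zero hq n)]

lemma qBinom_self (hq : ∀ k : ℕ, 0 < k → q ^ k ≠ 1) (n : ℕ) : qBinom q n n = 1 := by
  rw [qBinom, Nat.sub_self, qPoch_zero_self, mul_one, div_self (qPoch_self_ne_zero hq n)]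

lemma qBinom_succ_succ (hq : ∀ k : ℕ, 0 < k → q ^ k ≠ 1) {n i : ℕ} (h : i < n) :
    qBinom q (n + 1) (i + 1) = q ^ (i + 1) * qBinom q n (i + 1) + qBinom q n i := by
  obtain ⟨j, rfl⟩ := Nat.exists_eq_add_of_lt h
  rw [qBinom, qBinom, qBinom, show i + j + 1 + 1 - (i + 1) = j + 1 by omega,
    show i + j + 1 - (i + 1) = j by omega, show i + j + 1 - i = j + 1 by omega,
    qPoch_succ_self (i + j + 1), qPoch_succ_self i, qPoch_succ_self j]
  have := qPoch_self_ne_zero hq i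
  have := qPoch_self_ne_zero hq j
  have := one_sub_pow_ne_zero hq (k := i + 1) (by omega)
  have := one_sub_pow_ne_zero hq (k := j + 1) (by omega)
  field_simp
  ring

lemma qBinom_succ_sub_qBinom_mul (hq : ∀ k : ℕ, 0 < k → q ^ k ≠ 1) {n i : ℕ} (hi : 1 ≤ i)
    (hin : i ≤ n) :
    (qBinom q (n + 1) i - qBinom q n i) * (q ^ i / (1 - q ^ i))
      = q ^ (n + 1) / (1 - q ^ (n + 1)) * qBinom q (n + 1) i := by
  obtain ⟨j, rfl⟩ := Nat.exists_eq_add_of_le hin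
  rw [qBinom, qBinom, show i + j + 1 - i = j + 1 by omega, show i + j - i = j by omega,
    qPoch_succ_self (i + j), qPoch_succ_self j]
  have := qPoch_self_ne_zero hq i
  have := qPoch_self_ne_zero hq j
  have := one_sub_pow_ne_zero hq (k := i) (by omega)
  have := one_sub_pow_ne_zero hq (k := i + j + 1) (by omega)
  have := one_sub_pow_ne_zero hq (k := j + 1) (by omega)
  field_simp
  ring

lemma sum_Icc_qBinom_mul_neg_one_pow (hq : ∀ k : ℕ, 0 < k → q ^ k ≠ 1) (n : ℕ) :
    ∑ i ∈ Icc 1 (n + 1), qBinom q (n + 1) i * (-1 : K) ^ (i - 1) * q ^ i.choose 2 = 1 := by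
  -- by q-Pascal the `(k+1)`-st term is `u k - u (k+1)`, so the sum telescopes
  set u : ℕ → K := fun k => (-1) ^ k * q ^ (k + 1).choose 2 * qBinom q n k
  have hterm : ∀ k ∈ range n,
      qBinom q (n + 1) (1 + k) * (-1 : K) ^ (1 + k - 1) * q ^ (1 + k).choose 2
        = u k - u (k + 1) := by
    intro k hk
    rw [add_comm 1 k, Nat.add_sub_cancel, qBinom_succ_succ hq (mem_range.mp hk)]
    simp only [u, Nat.choose_succ_succ' (k + 1) 1, Nat.choose_one_right, pow_add, pow_succ]
    ring
  rw [← Ico_add_one_right_eq_Icc, sum_Ico_eq_sum_range, Nat.add_sub_cancel, sum_range_succ,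
    sum_congr rfl hterm, sum_range_sub', add_comm 1 n, Nat.add_sub_cancel, qBinom_self hq]
  simp [u, qBinom_self hq, qBinom_zero_right hq]

noncomputable def dilcherTerm (q : K) (n m i : ℕ) : K :=
  qBinom q n i * (-1 : K) ^ (i - 1) * q ^ (i.choose 2 + m * i) / (1 - q ^ i) ^ m

noncomputable def dilcherSum (q : K) (n m : ℕ) : K :=
  ∑ i ∈ Icc 1 n, dilcherTerm q n m i

lemma dilcherTerm_eq (n m i : ℕ) :
    dilcherTerm q n m i
      = qBinom q n i * (-1 : K) ^ (i - 1) * q ^ i.choose 2 * (q ^ i / (1 - q ^ i)) ^ m := by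
  rw [dilcherTerm, div_pow, ← pow_mul, pow_add, mul_comm m i]
  ring

lemma dilcherTerm_succ_succ (hq : ∀ k : ℕ, 0 < k → q ^ k ≠ 1) {n i : ℕ} (m : ℕ)
    (hi : 1 ≤ i) (hin : i ≤ n) :
    dilcherTerm q (n + 1) (m + 1) i
      = dilcherTerm q n (m + 1) i
        + q ^ (n + 1) / (1 - q ^ (n + 1)) * dilcherTerm q (n + 1) m i := by
  simp only [dilcherTerm_eq, pow_succ]
  linear_combination ((-1 : K) ^ (i - 1) * q ^ i.choose 2 * (q ^ i / (1 - q ^ i)) ^ m) *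
    qBinom_succ_sub_qBinom_mul hq hi hin

lemma dilcherTerm_succ_right (n m i : ℕ) :
    dilcherTerm q n (m + 1) i = q ^ i / (1 - q ^ i) * dilcherTerm q n m i := by
  simp only [dilcherTerm_eq, pow_succ]
  ring

lemma dilcherSum_zero_left (m : ℕ) : dilcherSum q 0 m = 0 := by
  simp [dilcherSum]

lemma dilcherSum_succ_zero (hq : ∀ k : ℕ, 0 < k → q ^ k ≠ 1) (n : ℕ) :
    dilcherSum q (n + 1) 0 = 1 := by
  simpa [dilcherSum, dilcherTerm] using sum_Icc_qBinom_mul_neg_one_pow hq n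

lemma dilcherSum_succ_succ (hq : ∀ k : ℕ, 0 < k → q ^ k ≠ 1) (n m : ℕ) :
    dilcherSum q (n + 1) (m + 1)
      = dilcherSum q n (m + 1) + q ^ (n + 1) / (1 - q ^ (n + 1)) * dilcherSum q (n + 1) m := by
  have hlow : ∀ i ∈ Icc 1 n, dilcherTerm q (n + 1) (m + 1) i
      = dilcherTerm q n (m + 1) i + q ^ (n + 1) / (1 - q ^ (n + 1)) * dilcherTerm q (n + 1) m i :=
    fun i hi => dilcherTerm_succ_succ hq m (mem_Icc.mp hi).1 (mem_Icc.mp hi).2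
  rw [dilcherSum, dilcherSum, dilcherSum, sum_Icc_succ_top (by omega), sum_congr rfl hlow,
    sum_add_distrib, ← mul_sum, sum_Icc_succ_top (by omega), dilcherTerm_succ_right]
  ring

lemma wsum_succ_succ (f : ℕ → K) (m : ℕ) {lo n : ℕ} (h : lo ≤ n + 1) :
    wsum f (m + 1) lo (n + 1) = wsum f (m + 1) lo n + f (n + 1) * wsum f m lo (n + 1) := by
  induction m generalizing lo with
  | zero => simp only [wsum, sum_Icc_succ_top h]
  | succ m ih =>
    have hstep : ∀ j ∈ Icc lo (n + 1), f j * wsum f (m + 1) j (n + 1)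
        = f j * wsum f (m + 1) j n + f (n + 1) * (f j * wsum f m j (n + 1)) := fun j hj => by
      rw [ih (mem_Icc.mp hj).2]
      ring
    have hempty : wsum f (m + 1) (n + 1) n = 0 := by simp [wsum]
    rw [wsum, sum_congr rfl hstep, sum_add_distrib, ← mul_sum, sum_Icc_succ_top h, hempty,
      mul_zero, add_zero]
    rfl

theorem dilcherSum_eq_wsum (hq : ∀ k : ℕ, 0 < k → q ^ k ≠ 1) {n m : ℕ} (h : n ≠ 0 ∨ m ≠ 0) :
    dilcherSum q n m = wsum (fun j => q ^ j / (1 - q ^ j)) m 1 n := by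
  induction m generalizing n with
  | zero =>
    obtain ⟨n, rfl⟩ := Nat.exists_eq_succ_of_ne_zero (h.resolve_right (by simp))
    exact dilcherSum_succ_zero hq n
  | succ m ihm =>
    induction n with
    | zero => simp [dilcherSum_zero_left, wsum]
    | succ n ihn =>
      rw [dilcherSum_succ_succ hq, wsum_succ_succ _ _ (by omega), ihn (.inr m.succ_ne_zero),
        ihm (.inl n.succ_ne_zero)]

end

theorem dilcher_general {K : Type*} [Field K] (q : K)
    (hq : ∀ k : ℕ, 0 < k → q ^ k ≠ 1) (n m : ℕ) (hn : 1 ≤ n) :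
    ∑ i ∈ Icc 1 n, qBinom q n i * (-1 : K) ^ (i - 1) *
        q ^ (i.choose 2 + m * i) / (1 - q ^ i) ^ m
      = wsum (fun j => q ^ j / (1 - q ^ j)) m 1 n :=
  dilcherSum_eq_wsum hq (.inl (Nat.one_le_iff_ne_zero.mp hn))

/-- Dilcher's identity. -/
theorem dilcher {K : Type*} [Field K] (q : K)
    (hq : ∀ k : ℕ, 0 < k → q ^ k ≠ 1) (n m : ℕ) (hn : 1 ≤ n) (hm : 1 ≤ m) :
    ∑ i ∈ Icc 1 n, qBinom q n i * (-1 : K) ^ (i - 1) *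
        q ^ (i.choose 2 + m * i) / (1 - q ^ i) ^ m
      = wsum (fun j => q ^ j / (1 - q ^ j)) m 1 n :=
  dilcher_general q hq n m hn
end

section
/- As formal power series in w (with coefficients in formal power series in q with rational function coefficients in x), the infinite product ∏_{h≥1} (1 + x w q^h/(1 + x q^h)) equals 1 - w ∑_{i≥1} (-x)^i (q^i/(1-q^i)) ∏_{1 ≤ h < i} (1 - w q^h/(1-q^h)). -/
open Finset PowerSeries

/-- The base field of rational functions in `x`. -/
noncomputable abbrev FLField : Type := RatFunc ℚ

/-- Formal power series in `q` with rational-function (in `x`) coefficients. -/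
noncomputable abbrev QSeries : Type := PowerSeries FLField

/-- Formal power series in `w` over `QSeries`. -/
noncomputable abbrev WSeries : Type := PowerSeries QSeries

/-- `x` as an element of `QSeries`. -/
noncomputable def xq : QSeries := PowerSeries.C (R := FLField) (RatFunc.X)

/-- The `q`-variable of `QSeries`. -/
noncomputable def qv : QSeries := PowerSeries.X

/-!
Write `φ h = q^h/(1-q^h) = ∑_{m ≥ 1} q^{hm}`; then `x q^h/(1+x q^h) = -∑_{m ≥ 1} (-x)^m q^{hm}`.
The coefficient of `w^b q^a` on the left is therefore `(-1)^b` times the sum, over the partitions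
of `a` with exactly `b` distinct part sizes, of `(-x)^(number of parts)`. On the right,
`w (-x)^i φ i ∏_{h<i} (1 - w φ h)` chooses `b` distinct part sizes with largest one `i`, so the same
coefficient is `(-1)^b` times the sum over the same partitions of `(-x)^(largest part)`.
Conjugation of partitions keeps the number of distinct part sizes and exchanges the number of
parts with the largest part. Only part sizes `≤ a` matter, so the truncations at `H, I ≥ a` are
already exact.
-/

namespace PowerSeries

theorem coeff_prod_one_add_C_mul_X {R ι : Type*} [CommSemiring R] (s : Finset ι) (f : ι → R)
    (n : ℕ) : coeff n (∏ i ∈ s, (1 + C (f i) * X)) = ∑ t ∈ s.powersetCard n, ∏ i ∈ t, f i := by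
  simp_rw [prod_one_add, map_sum, prod_mul_distrib, prod_const, ← map_prod, coeff_C_mul_X_pow]
  rw [powersetCard_eq_filter, sum_filter]
  simp_rw [eq_comm]

theorem coeff_prod_eq_sum_of_coeff_eq_ite_dvd {R ι : Type*} [CommSemiring R] [Fintype ι]
    [DecidableEq ι] (f : ι → R⟦X⟧) (e : ι → ℕ) (g : ι → ℕ → R) (he : ∀ i, 0 < e i)
    (hf : ∀ i n, coeff n (f i) = if e i ∣ n ∧ n ≠ 0 then g i (n / e i) else 0) (a : ℕ) :
    coeff a (∏ i, f i) = ∑ v ∈ Fintype.piFinset (fun _ => range (a + 1)) with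
      ∑ i, (v i + 1) * e i = a, ∏ i, g i (v i + 1) := by
  set V := {v ∈ Fintype.piFinset (fun _ : ι => range (a + 1)) | ∑ i, (v i + 1) * e i = a}
  let toFinsupp (v : ι → ℕ) : ι →₀ ℕ := Finsupp.equivFunOnFinite.symm fun i => (v i + 1) * e i
  have toFinsupp_injective : Function.Injective toFinsupp := fun v v' h => funext fun i => by
    have := DFunLike.congr_fun h i
    simp only [toFinsupp, Finsupp.coe_equivFunOnFinite_symm] at this
    have := Nat.eq_of_mul_eq_mul_right (he i) this
    omega
  have coeff_toFinsupp (v : ι → ℕ) (i : ι) : coeff (toFinsupp v i) (f i) = g i (v i + 1) := by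
    rw [hf, if_pos ⟨dvd_mul_left _ _, Nat.mul_ne_zero (Nat.succ_ne_zero _) (he i).ne'⟩]
    exact congrArg _ (Nat.mul_div_cancel _ (he i))
  rw [coeff_prod, ← sum_subset (s₁ := V.image toFinsupp), sum_image toFinsupp_injective.injOn]
  · exact sum_congr rfl fun v _ => prod_congr rfl fun i _ => coeff_toFinsupp v i
  · intro l hl
    obtain ⟨v, hv, rfl⟩ := mem_image.1 hl
    exact mem_finsuppAntidiag.2 ⟨(mem_filter.1 hv).2, subset_univ _⟩
  intro l hl hlV
  by_cases hdvd : ∀ i, e i ∣ l i ∧ l i ≠ 0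
  · have hv (i : ι) : (l i / e i - 1 + 1) * e i = l i := by
      obtain ⟨hdvd, hne⟩ := hdvd i
      have : 1 ≤ l i / e i :=
        (Nat.one_le_div_iff (he i)).2 (Nat.le_of_dvd (Nat.pos_of_ne_zero hne) hdvd)
      rw [Nat.sub_add_cancel this, Nat.div_mul_cancel hdvd]
    have hsum : ∑ i, l i = a := (mem_finsuppAntidiag.1 hl).1
    refine absurd (mem_image.2 ⟨fun i => l i / e i - 1, mem_filter.2 ⟨?_, ?_⟩, ?_⟩) hlV
    · refine Fintype.mem_piFinset.2 fun i => mem_range.2 (Nat.lt_succ_of_le ?_)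
      calc l i / e i - 1 ≤ (l i / e i - 1 + 1) * e i := by nlinarith [he i]
        _ = l i := hv i
        _ ≤ a := hsum ▸ single_le_sum (fun _ _ => Nat.zero_le _) (mem_univ i)
    · simpa only [hv] using hsum
    · ext i
      simp [toFinsupp, hv]
  · push Not at hdvd
    obtain ⟨i, hi⟩ := hdvd
    exact prod_eq_zero (mem_univ i) (by rw [hf, if_neg fun h => h.2 (hi h.1)])

variable {k : Type*} [Field k]

theorem inv_one_sub_C_mul_X_pow (c : k) {h : ℕ} (hh : h ≠ 0) :
    (1 - C c * X ^ h)⁻¹ = expand h hh (rescale c (mk 1)) := by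
  rw [PowerSeries.inv_eq_iff_mul_eq_one (by simp [hh])]
  have := congrArg (fun f => expand h hh (rescale c f)) (mk_one_mul_one_sub_eq_one (S := k))
  simpa [rescale_X, expand_X, expand_C] using this

theorem coeff_C_mul_X_pow_mul_inv_one_sub (c : k) {h : ℕ} (hh : 0 < h) (n : ℕ) :
    coeff n (C c * X ^ h * (1 - C c * X ^ h)⁻¹) = if h ∣ n ∧ n ≠ 0 then c ^ (n / h) else 0 := by
  have hinv : (1 - C c * X ^ h) * (1 - C c * X ^ h)⁻¹ = 1 :=
    PowerSeries.mul_inv_cancel _ (by simp [hh.ne'])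
  have : C c * X ^ h * (1 - C c * X ^ h)⁻¹ = (1 - C c * X ^ h)⁻¹ - 1 := by
    linear_combination -hinv
  rw [this, map_sub, inv_one_sub_C_mul_X_pow c hh.ne', coeff_expand, coeff_rescale, coeff_mk,
    coeff_one]
  by_cases hn : n = 0 <;> simp [hn]

theorem coeff_X_pow_mul_inv_one_sub_X_pow {h : ℕ} (hh : 0 < h) (n : ℕ) :
    coeff n (X ^ h * (1 - X ^ h)⁻¹ : k⟦X⟧) = if h ∣ n ∧ n ≠ 0 then 1 else 0 := by
  simpa using coeff_C_mul_X_pow_mul_inv_one_sub (1 : k) hh n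

theorem coeff_C_mul_X_pow_mul_inv_one_add (x : k) {h : ℕ} (hh : 0 < h) (n : ℕ) :
    coeff n (C x * X ^ h * (1 + C x * X ^ h)⁻¹) =
      if h ∣ n ∧ n ≠ 0 then -(-x) ^ (n / h) else 0 := by
  have : C x * X ^ h * (1 + C x * X ^ h)⁻¹ = -(C (-x) * X ^ h * (1 - C (-x) * X ^ h)⁻¹) := by
    simp
  rw [this, map_neg, coeff_C_mul_X_pow_mul_inv_one_sub _ hh]
  split_ifs <;> simp

end PowerSeries

theorem sum_Icc_sum_powersetCard_insert {M : Type*} [AddCommMonoid M] (G : Finset ℕ → M)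
    (I k : ℕ) :
    ∑ i ∈ Icc 1 I, ∑ S ∈ (Icc 1 (i - 1)).powersetCard k, G (insert i S) =
      ∑ S ∈ (Icc 1 I).powersetCard (k + 1), G S := by
  induction I with
  | zero => rw [Icc_eq_empty (by omega), powersetCard_eq_empty.2 (by simp)]; simp
  | succ I ih =>
    have hI : I + 1 ∉ Icc 1 I := by simp
    have hnotMem {S} (hS : S ∈ (Icc 1 I).powersetCard k) : I + 1 ∉ S :=
      fun h => hI (mem_powersetCard.1 hS |>.1 h)
    rw [sum_Icc_succ_top (by omega), ih, Nat.add_sub_cancel,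
      ← insert_Icc_right_eq_Icc_add_one (by omega), powersetCard_succ_insert hI, sum_union,
      sum_image fun S hS S' hS' h => by
        rw [← erase_insert (hnotMem hS), ← erase_insert (hnotMem hS'), h]]
    refine disjoint_left.2 fun S hS hS' => ?_
    obtain ⟨S', hS', rfl⟩ := mem_image.1 hS'
    exact hI (mem_powersetCard.1 hS |>.1 (mem_insert_self _ _))

theorem sup_id_insert_of_subset_Icc {i : ℕ} {S : Finset ℕ} (hS : S ⊆ Icc 1 (i - 1)) :
    (insert i S).sup id = i := by
  rw [sup_insert, id, sup_eq_left]
  exact Finset.sup_le fun h hh => (mem_Icc.1 (hS hh)).2.trans (Nat.sub_le i 1)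

section Partitions

variable {b : ℕ}

/-- A partition with `b` distinct part sizes is encoded by `u v : Fin b → ℕ`: its `j`-th smallest
part size exceeds the previous one (or `0`) by `u j + 1` and occurs `v j + 1` times. -/
def partSize (u : Fin b → ℕ) (j : Fin b) : ℕ := ∑ i ∈ Iic j, (u i + 1)

def partWeight (u v : Fin b → ℕ) : ℕ := ∑ j, (v j + 1) * partSize u j

theorem partSize_strictMono (u : Fin b → ℕ) : StrictMono (partSize u) := fun i j hij =>
  sum_lt_sum_of_subset (Iic_subset_Iic.2 hij.le) (mem_Iic.2 le_rfl) (by simpa using hij)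
    (Nat.succ_pos _) fun _ _ _ => Nat.zero_le _

theorem add_one_le_partSize (u : Fin b → ℕ) (j : Fin b) : u j + 1 ≤ partSize u j :=
  single_le_sum (f := fun i => u i + 1) (fun _ _ => Nat.zero_le _) (mem_Iic.2 le_rfl)

theorem partSize_pos (u : Fin b → ℕ) (j : Fin b) : 0 < partSize u j :=
  (Nat.succ_pos _).trans_le (add_one_le_partSize u j)

theorem partSize_zero {n : ℕ} (u : Fin (n + 1) → ℕ) : partSize u 0 = u 0 + 1 := by
  rw [partSize, show Iic (0 : Fin (n + 1)) = {0} from Iic_bot, sum_singleton]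

theorem partSize_succ {n : ℕ} (u : Fin (n + 1) → ℕ) (i : Fin n) :
    partSize u i.succ = partSize u i.castSucc + (u i.succ + 1) := by
  have : Iic i.succ = cons i.succ (Iic i.castSucc) (by simp) := by
    ext j
    simp only [mem_Iic, mem_cons, Fin.le_iff_val_le_val, Fin.ext_iff, Fin.val_succ,
      Fin.val_castSucc]
    omega
  rw [partSize, this, sum_cons, partSize, add_comm]

theorem partSize_injective : Function.Injective (partSize (b := b)) := by
  intro u u' h
  cases b with
  | zero => exact funext finZeroElim
  | succ n =>
    funext j
    induction j using Fin.cases with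
    | zero => simpa [partSize_zero] using congrFun h 0
    | succ i =>
      have hsucc := congrFun h i.succ
      have hcastSucc := congrFun h i.castSucc
      rw [partSize_succ, partSize_succ] at hsucc
      omega

theorem exists_partSize_eq {e : Fin b → ℕ} (he : StrictMono e) (hpos : ∀ j, 0 < e j) :
    ∃ u, partSize u = e := by
  cases b with
  | zero => exact ⟨finZeroElim, funext finZeroElim⟩
  | succ n =>
    refine ⟨Fin.cases (e 0 - 1) fun i => e i.succ - e i.castSucc - 1, funext fun j => ?_⟩
    induction j using Fin.induction with
    | zero =>
      have := hpos 0
      rw [partSize_zero, Fin.cases_zero]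
      omega
    | succ i ih =>
      have := he (Fin.castSucc_lt_succ (i := i))
      rw [partSize_succ, ih, Fin.cases_succ]
      omega

theorem sup_image_partSize (u : Fin b → ℕ) :
    (univ.image (partSize u)).sup id = ∑ i, (u i + 1) := by
  rw [sup_image, Function.id_comp]
  cases b with
  | zero => simp
  | succ n =>
    have hlast : partSize u (Fin.last n) = ∑ i, (u i + 1) := by
      rw [partSize, show Iic (Fin.last n) = univ from Iic_top]
    rw [← hlast]
    exact le_antisymm (Finset.sup_le fun j _ => (partSize_strictMono u).monotone (Fin.le_last j))
      (le_sup (f := partSize u) (mem_univ _))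

theorem le_partWeight (u v : Fin b → ℕ) (j : Fin b) :
    (v j + 1) * partSize u j ≤ partWeight u v :=
  single_le_sum (f := fun j => (v j + 1) * partSize u j) (fun _ _ => Nat.zero_le _) (mem_univ j)

theorem partSize_le_partWeight (u v : Fin b → ℕ) (j : Fin b) : partSize u j ≤ partWeight u v :=
  (Nat.le_mul_of_pos_left _ (Nat.succ_pos _)).trans (le_partWeight u v j)

theorem add_one_le_partWeight (u v : Fin b → ℕ) (j : Fin b) : v j + 1 ≤ partWeight u v :=
  (Nat.le_mul_of_pos_right _ (partSize_pos u j)).trans (le_partWeight u v j)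

theorem partWeight_eq_sum_sum (u v : Fin b → ℕ) :
    partWeight u v = ∑ j, ∑ i, if i ≤ j then (u i + 1) * (v j + 1) else 0 := by
  refine sum_congr rfl fun j _ => ?_
  rw [partSize, mul_sum, ← sum_filter]
  exact sum_congr (by ext; simp) fun i _ => mul_comm _ _

theorem partWeight_swap_rev (u v : Fin b → ℕ) :
    partWeight (v ∘ Fin.rev) (u ∘ Fin.rev) = partWeight u v := by
  rw [partWeight_eq_sum_sum, partWeight_eq_sum_sum, sum_comm]
  refine Fintype.sum_equiv Fin.revPerm _ _ fun i => Fintype.sum_equiv Fin.revPerm _ _ fun j => ?_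
  simp [mul_comm]

def partitionCodes (a b : ℕ) : Finset ((Fin b → ℕ) × (Fin b → ℕ)) :=
  {p ∈ (Fintype.piFinset fun _ => range (a + 1)) ×ˢ (Fintype.piFinset fun _ => range (a + 1)) |
    partWeight p.1 p.2 = a}

theorem mem_partitionCodes {a : ℕ} {p : (Fin b → ℕ) × (Fin b → ℕ)} :
    p ∈ partitionCodes a b ↔ partWeight p.1 p.2 = a := by
  refine ⟨fun h => (mem_filter.1 h).2, fun h => mem_filter.2 ⟨?_, h⟩⟩
  simp only [mem_product, Fintype.mem_piFinset, mem_range]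
  refine ⟨fun j => ?_, fun j => ?_⟩
  · have := add_one_le_partSize p.1 j
    have := partSize_le_partWeight p.1 p.2 j
    omega
  · have := add_one_le_partWeight p.1 p.2 j
    omega

/-- `∑ j, (v j + 1)` is the number of parts and `∑ j, (u j + 1)` the largest part; conjugating the
partition reverses and swaps `u` and `v`. -/
theorem sum_partitionCodes_sum_snd_eq_sum_fst {M : Type*} [AddCommMonoid M] (F : ℕ → M)
    (a b : ℕ) :
    ∑ p ∈ partitionCodes a b, F (∑ j, (p.2 j + 1)) =
      ∑ p ∈ partitionCodes a b, F (∑ j, (p.1 j + 1)) := by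
  let conj (p : (Fin b → ℕ) × (Fin b → ℕ)) : (Fin b → ℕ) × (Fin b → ℕ) :=
    (p.2 ∘ Fin.rev, p.1 ∘ Fin.rev)
  have conj_conj (p) : conj (conj p) = p := by simp [conj, Function.comp_def]
  have conj_mem {p} (hp : p ∈ partitionCodes a b) : conj p ∈ partitionCodes a b := by
    rw [mem_partitionCodes] at hp ⊢
    rwa [partWeight_swap_rev]
  refine sum_nbij' conj conj (fun p hp => conj_mem hp) (fun p hp => conj_mem hp)
    (fun p _ => conj_conj p) (fun p _ => conj_conj p) fun p _ => ?_
  exact congrArg F (Equiv.sum_comp Fin.revPerm _).symm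

def partSizeCodes (N b : ℕ) : Finset (Fin b → ℕ) :=
  {u ∈ Fintype.piFinset fun _ => range (N + 1) | ∀ j, partSize u j ≤ N}

theorem mem_partSizeCodes {N : ℕ} {u : Fin b → ℕ} :
    u ∈ partSizeCodes N b ↔ ∀ j, partSize u j ≤ N := by
  refine ⟨fun h => (mem_filter.1 h).2, fun h => mem_filter.2 ⟨?_, h⟩⟩
  refine Fintype.mem_piFinset.2 fun j => mem_range.2 ?_
  have := add_one_le_partSize u j
  have := h j
  omega

theorem sum_powersetCard_Icc_eq_sum_partSizeCodes {M : Type*} [AddCommMonoid M]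
    (F : Finset ℕ → M) (N b : ℕ) :
    ∑ S ∈ (Icc 1 N).powersetCard b, F S =
      ∑ u ∈ partSizeCodes N b, F (univ.image (partSize u)) := by
  symm
  refine sum_nbij (fun u => univ.image (partSize u)) (fun u hu => ?_) (fun u _ u' _ h => ?_)
    (fun S hS => ?_) fun _ _ => rfl
  · rw [mem_partSizeCodes] at hu
    simp only [mem_powersetCard, subset_iff, mem_image, mem_univ, true_and, mem_Icc]
    refine ⟨?_, ?_⟩
    · rintro _ ⟨j, rfl⟩
      exact ⟨partSize_pos u j, hu j⟩
    · rw [card_image_of_injective _ (partSize_strictMono u).injective, card_univ, Fintype.card_fin]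
  · have hrange : Set.range (partSize u) = Set.range (partSize u') := by
      simpa [Set.image_univ] using congrArg ((↑) : Finset ℕ → Set ℕ) h
    exact partSize_injective
      (((partSize_strictMono u).range_inj (partSize_strictMono u')).1 hrange)
  · rw [mem_coe, mem_powersetCard] at hS
    obtain ⟨hSub, hcard⟩ := hS
    have hpos (j : Fin b) : 0 < S.orderEmbOfFin hcard j :=
      (mem_Icc.1 (hSub (orderEmbOfFin_mem S hcard j))).1
    obtain ⟨u, hu⟩ := exists_partSize_eq (S.orderEmbOfFin hcard).strictMono hpos
    have himage : univ.image (partSize u) = S := by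
      apply coe_injective
      rw [coe_image, coe_univ, Set.image_univ, hu, range_orderEmbOfFin]
    refine ⟨u, mem_partSizeCodes.2 fun j => ?_, himage⟩
    exact (mem_Icc.1 (hSub (himage ▸ mem_image_of_mem _ (mem_univ j)))).2

theorem sum_powersetCard_mul_coeff_prod {R : Type*} [CommSemiring R] (φ : ℕ → R⟦X⟧)
    (ψ : ℕ → ℕ → R)
    (hφ : ∀ h n, 0 < h → coeff n (φ h) = if h ∣ n ∧ n ≠ 0 then ψ h (n / h) else 0)
    (κ : Finset ℕ → R) {a N : ℕ} (haN : a ≤ N) (b : ℕ) :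
    ∑ S ∈ (Icc 1 N).powersetCard b, κ S * coeff a (∏ h ∈ S, φ h) =
      ∑ p ∈ partitionCodes a b,
        κ (univ.image (partSize p.1)) * ∏ j, ψ (partSize p.1 j) (p.2 j + 1) := by
  rw [sum_powersetCard_Icc_eq_sum_partSizeCodes,
    sum_finset_product (partitionCodes a b) (partSizeCodes N b)
      fun u => {v ∈ Fintype.piFinset fun _ => range (a + 1) | ∑ j, (v j + 1) * partSize u j = a}]
  · refine sum_congr rfl fun u _ => ?_
    rw [prod_image (partSize_strictMono u).injective.injOn,
      coeff_prod_eq_sum_of_coeff_eq_ite_dvd _ _ _ (partSize_pos u)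
        fun j n => hφ _ n (partSize_pos u j), mul_sum]
  · intro p
    rw [mem_partSizeCodes, mem_filter]
    refine ⟨fun hp => ⟨fun j => ?_, ?_, mem_partitionCodes.1 hp⟩,
      fun hp => mem_partitionCodes.2 hp.2.2⟩
    · exact (partSize_le_partWeight p.1 p.2 j).trans (mem_partitionCodes.1 hp ▸ haN)
    · exact (mem_product.1 (mem_filter.1 hp).1).2

end Partitions

section Field

variable {k : Type*} [Field k]

theorem coeff_coeff_prod_one_add (x : k) {a H : ℕ} (haH : a ≤ H) (b : ℕ) :
    coeff a (coeff b (∏ h ∈ Icc 1 H,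
      (1 + C (R := k⟦X⟧) (C x * X ^ h * (1 + C x * X ^ h)⁻¹) * X))) =
      (-1) ^ b * ∑ p ∈ partitionCodes a b, (-x) ^ ∑ j, (p.2 j + 1) := by
  rw [coeff_prod_one_add_C_mul_X, map_sum]
  have := sum_powersetCard_mul_coeff_prod _ (fun _ m => -(-x) ^ m)
    (fun h n hh => coeff_C_mul_X_pow_mul_inv_one_add x hh n) 1 haH b
  simp only [Pi.one_apply, one_mul] at this
  rw [this, mul_sum]
  refine sum_congr rfl fun p _ => ?_
  rw [prod_neg, prod_pow_eq_pow_sum, card_univ, Fintype.card_fin]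

theorem coeff_coeff_succ_one_sub_X_mul_sum (x : k) {a I : ℕ} (haI : a ≤ I) (b : ℕ) :
    coeff a (coeff (b + 1) (1 - X * ∑ i ∈ Icc 1 I,
      C (R := k⟦X⟧) ((-C x) ^ i * X ^ i * (1 - X ^ i)⁻¹) *
        ∏ h ∈ Icc 1 (i - 1), (1 - C (R := k⟦X⟧) (X ^ h * (1 - X ^ h)⁻¹) * X))) =
      (-1) ^ (b + 1) * ∑ p ∈ partitionCodes a (b + 1), (-x) ^ ∑ j, (p.1 j + 1) := by
  let φ (h : ℕ) : k⟦X⟧ := X ^ h * (1 - X ^ h)⁻¹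
  have one_sub (c : k⟦X⟧) : (1 : k⟦X⟧⟦X⟧) - C c * X = 1 + C (-c) * X := by
    rw [map_neg, neg_mul, sub_eq_add_neg]
  have hterm (i : ℕ) (hi : i ∈ Icc 1 I) :
      coeff b (C ((-C x) ^ i * X ^ i * (1 - X ^ i)⁻¹) *
        ∏ h ∈ Icc 1 (i - 1), (1 - C (X ^ h * (1 - X ^ h)⁻¹) * X)) =
        C ((-1) ^ b) * ∑ S ∈ (Icc 1 (i - 1)).powersetCard b,
          C ((-x) ^ (insert i S).sup id) * ∏ h ∈ insert i S, φ h := by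
    simp_rw [one_sub]
    rw [coeff_C_mul, coeff_prod_one_add_C_mul_X, mul_sum, mul_sum]
    refine sum_congr rfl fun S hS => ?_
    obtain ⟨hSsub, hcard⟩ := mem_powersetCard.1 hS
    have hiS : i ∉ S := fun h => by
      have := (mem_Icc.1 (hSsub h)).2
      have := (mem_Icc.1 hi).1
      omega
    rw [prod_neg, hcard, sup_id_insert_of_subset_Icc hSsub, prod_insert hiS]
    simp only [φ, map_pow, map_neg, map_one]
    ring
  rw [map_sub, coeff_one, if_neg b.succ_ne_zero, coeff_succ_X_mul, map_sum, sum_congr rfl hterm,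
    ← mul_sum, sum_Icc_sum_powersetCard_insert (fun S => C ((-x) ^ S.sup id) * ∏ h ∈ S, φ h),
    zero_sub, map_neg, coeff_C_mul, map_sum]
  simp only [coeff_C_mul]
  rw [sum_powersetCard_mul_coeff_prod φ (fun _ _ => 1)
    (fun h n hh => coeff_X_pow_mul_inv_one_sub_X_pow hh n) (fun S => (-x) ^ S.sup id) haI (b + 1)]
  simp only [sup_image_partSize, prod_const_one, mul_one]
  ring

theorem coeff_coeff_prod_one_add_eq_coeff_coeff_one_sub_X_mul_sum (x : k) {a H I : ℕ}
    (haH : a ≤ H) (haI : a ≤ I) (b : ℕ) :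
    coeff a (coeff b (∏ h ∈ Icc 1 H,
      (1 + C (R := k⟦X⟧) (C x * X ^ h * (1 + C x * X ^ h)⁻¹) * X))) =
    coeff a (coeff b (1 - X * ∑ i ∈ Icc 1 I,
      C (R := k⟦X⟧) ((-C x) ^ i * X ^ i * (1 - X ^ i)⁻¹) *
        ∏ h ∈ Icc 1 (i - 1), (1 - C (R := k⟦X⟧) (X ^ h * (1 - X ^ h)⁻¹) * X))) := by
  cases b with
  | zero => simp
  | succ b =>
    rw [coeff_coeff_prod_one_add x haH, coeff_coeff_succ_one_sub_X_mul_sum x haI,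
      sum_partitionCodes_sum_snd_eq_sum_fst]

end Field

/-- As formal power series in `w` (coefficients formal power series in `q` with
rational-function coefficients in `x`), the product `∏_{h ≥ 1} (1 + x w q^h/(1+x q^h))`
equals `1 - w ∑_{i ≥ 1} (-x)^i (q^i/(1-q^i)) ∏_{1 ≤ h < i} (1 - w q^h/(1-q^h))`.
Both sides converge coefficientwise, so the identity is stated as: every fixed
coefficient (of `q^a w^b`) of the partial products/sums stabilizes to a common value. -/
theorem infinite_product_expansion :
    ∀ a b : ℕ, ∃ N : ℕ, ∀ H : ℕ, N ≤ H → ∀ I : ℕ, N ≤ I →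
      (PowerSeries.coeff (R := FLField) a) ((PowerSeries.coeff (R := QSeries) b)
        (∏ h ∈ Icc 1 H,
          (1 + PowerSeries.C (R := QSeries) (xq * qv ^ h * (1 + xq * qv ^ h)⁻¹) * PowerSeries.X)))
      = (PowerSeries.coeff (R := FLField) a) ((PowerSeries.coeff (R := QSeries) b)
        (1 - PowerSeries.X * ∑ i ∈ Icc 1 I,
          PowerSeries.C (R := QSeries) ((-xq) ^ i * qv ^ i * (1 - qv ^ i)⁻¹) *
            ∏ h ∈ Icc 1 (i - 1),
              (1 - PowerSeries.C (R := QSeries) (qv ^ h * (1 - qv ^ h)⁻¹) * PowerSeries.X))) := by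
  intro a b
  exact ⟨a, fun H hH I hI =>
    coeff_coeff_prod_one_add_eq_coeff_coeff_one_sub_X_mul_sum RatFunc.X hH hI b⟩
end

section
/- For complex q with 0 < |q| < 1, x with no factor vanishing, and any n ≥ 1, 1 ≤ h_1 < h_2 ranges give: ∑_{1 ≤ h_1 < h_2} (x q^{h_1}/(1+x q^{h_1}))(x q^{h_2}/(1+x q^{h_2})) = ∑_{1 ≤ k_1 < k_2} (-x)^{k_2} (q^{k_1}/(1-q^{k_1})) (q^{k_2}/(1-q^{k_2})). -/
/-!
Expand each factor `x q^h / (1 + x q^h)` as the geometric series `-∑_{k ≥ 1} (-x q^h)^k`.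
Writing `h₁ = a + 1`, `h₂ = h₁ + m + 1`, the left side becomes a sum over `(a, m, k₁, k₂) ∈ ℕ⁴` of
`(-x)^K q^{(a+1) K + (m+1)(k₂+1)}` with `K = k₁ + k₂ + 2`; this family is absolutely summable, so
summing first over `(a, m)` instead gives `(-x)^K (q^K / (1 - q^K)) (q^{k₂+1} / (1 - q^{k₂+1}))`,
and `k₂ + 1 < K` is the right side.
-/

namespace QSeries

def ltPairEquiv : ℕ × ℕ ≃ {p : ℕ × ℕ // p.1 < p.2} where
  toFun p := ⟨(p.1, p.1 + p.2 + 1), by omega⟩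
  invFun p := (p.1.1, p.1.2 - p.1.1 - 1)
  left_inv p := Prod.ext rfl (by simp only; omega)
  right_inv := fun ⟨⟨a, b⟩, h⟩ => Subtype.ext (Prod.ext rfl (by simp only; omega))

lemma tsum_subtype_lt {α : Type*} [AddCommMonoid α] [TopologicalSpace α] (f : ℕ → ℕ → α) :
    ∑' p : {p : ℕ × ℕ // p.1 < p.2}, f p.1.1 p.1.2 = ∑' p : ℕ × ℕ, f p.1 (p.1 + p.2 + 1) :=
  (ltPairEquiv.tsum_eq fun p => f p.1.1 p.1.2).symm

variable {K : Type*} [NormedField K] {x q z w : K}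

lemma hasSum_pow_succ (hz : ‖z‖ < 1) : HasSum (fun n : ℕ => z ^ (n + 1)) (z / (1 - z)) := by
  simpa [pow_succ', div_eq_mul_inv] using (hasSum_geometric_of_norm_lt_one hz).mul_left z

lemma summable_norm_pow_succ (hz : ‖z‖ < 1) : Summable fun n : ℕ => ‖z ^ (n + 1)‖ := by
  simpa [norm_pow] using
    (summable_nat_add_iff 1).2 (summable_geometric_of_lt_one (norm_nonneg z) hz)

lemma summable_norm_pow_succ_mul_pow_succ [CompleteSpace K] (hz : ‖z‖ < 1) (hw : ‖w‖ < 1) :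
    Summable fun p : ℕ × ℕ => ‖z ^ (p.1 + 1) * w ^ (p.2 + 1)‖ :=
  Summable.mul_norm (f := fun n => z ^ (n + 1)) (g := fun n => w ^ (n + 1))
    (summable_norm_pow_succ hz) (summable_norm_pow_succ hw)

lemma hasSum_pow_succ_mul_pow_succ [CompleteSpace K] (hz : ‖z‖ < 1) (hw : ‖w‖ < 1) :
    HasSum (fun p : ℕ × ℕ => z ^ (p.1 + 1) * w ^ (p.2 + 1)) (z / (1 - z) * (w / (1 - w))) :=
  HasSum.mul (f := fun n => z ^ (n + 1)) (g := fun n => w ^ (n + 1)) (hasSum_pow_succ hz)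
    (hasSum_pow_succ hw) (summable_norm_pow_succ_mul_pow_succ hz hw).of_norm

def doubleLambertTerm (x q : K) (p : (ℕ × ℕ) × (ℕ × ℕ)) : K :=
  (-x) ^ (p.2.1 + p.2.2 + 2) *
    ((q ^ (p.2.1 + p.2.2 + 2)) ^ (p.1.1 + 1) * (q ^ (p.2.2 + 1)) ^ (p.1.2 + 1))

lemma doubleLambertTerm_eq (x q : K) (a m k₁ k₂ : ℕ) :
    doubleLambertTerm x q ((a, m), (k₁, k₂)) =
      (-x * q ^ (a + 1)) ^ (k₁ + 1) * (-x * q ^ (a + m + 2)) ^ (k₂ + 1) := by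
  simp only [doubleLambertTerm, mul_pow, ← pow_mul]
  ring

lemma norm_neg_mul_pow_lt_one (hx : ‖x‖ < 1) (hq : ‖q‖ < 1) {n : ℕ} : ‖-x * q ^ n‖ < 1 := by
  rw [norm_mul, norm_neg, norm_pow]
  exact mul_lt_one_of_nonneg_of_lt_one_left (norm_nonneg x) hx (pow_le_one₀ (norm_nonneg q) hq.le)

lemma norm_pow_lt_one (hq : ‖q‖ < 1) {n : ℕ} (hn : n ≠ 0) : ‖q ^ n‖ < 1 := by
  rw [norm_pow]; exact pow_lt_one₀ (norm_nonneg q) hq hn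

lemma hasSum_doubleLambertTerm_fst [CompleteSpace K] (hx : ‖x‖ < 1) (hq : ‖q‖ < 1) (a m : ℕ) :
    HasSum (fun k => doubleLambertTerm x q ((a, m), k))
      (x * q ^ (a + 1) / (1 + x * q ^ (a + 1)) *
        (x * q ^ (a + m + 2) / (1 + x * q ^ (a + m + 2)))) := by
  have h := hasSum_pow_succ_mul_pow_succ (norm_neg_mul_pow_lt_one hx hq (n := a + 1))
    (norm_neg_mul_pow_lt_one hx hq (n := a + m + 2))
  simp only [neg_mul, neg_div, sub_neg_eq_add, mul_neg, neg_neg] at h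
  convert h using 1
  funext ⟨k₁, k₂⟩
  rw [doubleLambertTerm_eq, neg_mul, neg_mul]

lemma hasSum_doubleLambertTerm_snd [CompleteSpace K] (hq : ‖q‖ < 1) (k₁ k₂ : ℕ) :
    HasSum (fun am => doubleLambertTerm x q (am, (k₁, k₂)))
      ((-x) ^ (k₁ + k₂ + 2) * (q ^ (k₁ + k₂ + 2) / (1 - q ^ (k₁ + k₂ + 2)) *
        (q ^ (k₂ + 1) / (1 - q ^ (k₂ + 1))))) :=
  (hasSum_pow_succ_mul_pow_succ (norm_pow_lt_one hq (by omega))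
    (norm_pow_lt_one hq (by omega))).mul_left _

lemma norm_doubleLambertTerm_le (hq : ‖q‖ ≤ 1) (p : (ℕ × ℕ) × (ℕ × ℕ)) :
    ‖doubleLambertTerm x q p‖ ≤
      ‖q ^ (p.1.1 + 1) * q ^ (p.1.2 + 1)‖ * ‖x ^ (p.2.1 + 1) * x ^ (p.2.2 + 1)‖ := by
  obtain ⟨⟨a, m⟩, k₁, k₂⟩ := p
  have hpow : ∀ n ≠ 0, ‖q‖ ^ n ≤ ‖q‖ := fun n hn => pow_le_of_le_one (norm_nonneg q) hq hn
  simp only [doubleLambertTerm, norm_mul, norm_pow, norm_neg]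
  rw [show k₁ + k₂ + 2 = (k₁ + 1) + (k₂ + 1) by omega, pow_add, mul_comm]
  gcongr
  · exact hpow _ (by omega)
  · exact hpow _ (by omega)

lemma summable_doubleLambertTerm [CompleteSpace K] (hx : ‖x‖ < 1) (hq : ‖q‖ < 1) :
    Summable (doubleLambertTerm x q) :=
  .of_norm_bounded ((summable_norm_pow_succ_mul_pow_succ hq hq).mul_of_nonneg
    (summable_norm_pow_succ_mul_pow_succ hx hx) (fun _ => norm_nonneg _) (fun _ => norm_nonneg _))
    (norm_doubleLambertTerm_le hq.le)

end QSeries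

open QSeries

theorem coeff_w_sq_general (q x : ℂ) (h1 : ‖q‖ < 1)
    (h2 : ‖x‖ < 1) :
    ∑' p : {p : ℕ × ℕ // p.1 < p.2},
        (x * q ^ (p.1.1 + 1) / (1 + x * q ^ (p.1.1 + 1))) *
          (x * q ^ (p.1.2 + 1) / (1 + x * q ^ (p.1.2 + 1)))
      = ∑' p : {p : ℕ × ℕ // p.1 < p.2},
          (-x) ^ (p.1.2 + 1) * (q ^ (p.1.1 + 1) / (1 - q ^ (p.1.1 + 1))) *
            (q ^ (p.1.2 + 1) / (1 - q ^ (p.1.2 + 1))) := by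
  calc _ = ∑' am : ℕ × ℕ, ∑' k : ℕ × ℕ, doubleLambertTerm x q (am, k) :=
        (tsum_subtype_lt fun a b => x * q ^ (a + 1) / (1 + x * q ^ (a + 1)) *
          (x * q ^ (b + 1) / (1 + x * q ^ (b + 1)))).trans
          (tsum_congr fun am => (hasSum_doubleLambertTerm_fst h2 h1 am.1 am.2).tsum_eq.symm)
    _ = ∑' k : ℕ × ℕ, ∑' am : ℕ × ℕ, doubleLambertTerm x q (am, k) :=
        (Summable.tsum_comm (f := fun am k => doubleLambertTerm x q (am, k))
          (summable_doubleLambertTerm h2 h1)).symm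
    _ = ∑' k : ℕ × ℕ, (-x) ^ (k.2 + k.1 + 1 + 1) * (q ^ (k.2 + 1) / (1 - q ^ (k.2 + 1))) *
          (q ^ (k.2 + k.1 + 1 + 1) / (1 - q ^ (k.2 + k.1 + 1 + 1))) := by
        refine tsum_congr fun ⟨k₁, k₂⟩ => (hasSum_doubleLambertTerm_snd h1 k₁ k₂).tsum_eq.trans ?_
        rw [show k₂ + k₁ + 1 + 1 = k₁ + k₂ + 2 by omega]
        ring
    _ = _ := ((Equiv.prodComm ℕ ℕ).tsum_eq _).trans (tsum_subtype_lt fun a b =>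
          (-x) ^ (b + 1) * (q ^ (a + 1) / (1 - q ^ (a + 1))) *
            (q ^ (b + 1) / (1 - q ^ (b + 1)))).symm

/-- The coefficient-of-`w²` computation:
`∑_{1 ≤ h₁ < h₂} (xq^{h₁}/(1+xq^{h₁}))(xq^{h₂}/(1+xq^{h₂}))
  = ∑_{1 ≤ k₁ < k₂} (-x)^{k₂} (q^{k₁}/(1-q^{k₁}))(q^{k₂}/(1-q^{k₂}))`
as absolutely convergent double series for `0 < |q| < 1`, `|x| < 1`.
Pairs `1 ≤ h₁ < h₂` are parametrized by `p : ℕ × ℕ` with `p.1 < p.2`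
via `hⱼ = pⱼ + 1`. -/
theorem coeff_w_sq (q x : ℂ) (h0 : 0 < ‖q‖) (h1 : ‖q‖ < 1)
    (h2 : ‖x‖ < 1) (hx : ∀ h : ℕ, 1 + x * q ^ (h + 1) ≠ 0) :
    ∑' p : {p : ℕ × ℕ // p.1 < p.2},
        (x * q ^ (p.1.1 + 1) / (1 + x * q ^ (p.1.1 + 1))) *
          (x * q ^ (p.1.2 + 1) / (1 + x * q ^ (p.1.2 + 1)))
      = ∑' p : {p : ℕ × ℕ // p.1 < p.2},
          (-x) ^ (p.1.2 + 1) * (q ^ (p.1.1 + 1) / (1 - q ^ (p.1.1 + 1))) *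
            (q ^ (p.1.2 + 1) / (1 - q ^ (p.1.2 + 1))) :=
  coeff_w_sq_general q x h1 h2
end

section
/- (q-Rice formula, residue form) Let q be a complex number with 0 < |q| < 1, n ≥ 1, and let f be a function meromorphic in a domain containing the points q^{-1}, …, q^{-n}, holomorphic at each of them. Then ∑_{i=1}^n [n choose i]_q (-1)^{i-1} q^{binom(i,2)} f(q^{-i}) = (1/2πi) ∮_C ((q;q)_n/(z;q)_{n+1}) f(z) dz, where C is a positively oriented contour encircling exactly the poles q^{-1}, …, q^{-n} of (z;q)_{n+1}^{-1} and no singularities of f. -/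
open Finset Metric Real

/-! The nodes `q^{-k}`, `0 ≤ k ≤ n`, are distinct, so Lagrange interpolation of the constant `1`
yields the partial fraction expansion
`(q;q)_n / (z;q)_{n+1} = ∑_{k=0}^n (-1)^{k+1} q^{binom(k,2)} [n choose k]_q / (z - q^{-k})`,
whose coefficients are the nodal weights of the geometric nodes `q^{-k}`. Integrating term by
term, Cauchy's integral formula turns the term at `q^{-k}`, `k ≥ 1`, into `2πi f(q^{-k})`, while
the term at the pole `1 = q^0`, which lies outside the disc, integrates to `0`. -/

/-- The q-Pochhammer symbol `(a;q)_n`. -/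
noncomputable def qPochC (q a : ℂ) (n : ℕ) : ℂ :=
  ∏ k ∈ Finset.range n, (1 - a * q ^ k)

/-- The Gaussian binomial coefficient. -/
noncomputable def qBinomC (q : ℂ) (n i : ℕ) : ℂ :=
  qPochC q q n / (qPochC q q i * qPochC q q (n - i))

theorem Lagrange.inv_eval_nodal_eq_sum {F ι : Type*} [Field F] [DecidableEq ι] {s : Finset ι}
    {v : ι → F} {x : F} (hvs : Set.InjOn v s) (hs : s.Nonempty) (hx : ∀ i ∈ s, x ≠ v i) :
    (Polynomial.eval x (nodal s v))⁻¹ = ∑ i ∈ s, nodalWeight s v i * (x - v i)⁻¹ := by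
  have h := eval_interpolate_not_at_node 1 hx
  simp only [interpolate_one hvs hs, Polynomial.eval_one, Pi.one_apply, mul_one] at h
  exact inv_eq_of_mul_eq_one_right h.symm

theorem qPochC_eq_mul_eval_nodal {q : ℂ} (hq : q ≠ 0) (z : ℂ) (m : ℕ) :
    qPochC q z m = (∏ k ∈ range m, -q ^ k) *
      Polynomial.eval z (Lagrange.nodal (range m) fun k => (q ^ k)⁻¹) := by
  rw [Lagrange.eval_nodal, qPochC, ← prod_mul_distrib]
  refine prod_congr rfl fun k _ => ?_
  field_simp
  ring

theorem prod_range_one_sub_inv_pow_succ {q : ℂ} (hq : q ≠ 0) (i : ℕ) :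
    ∏ k ∈ range i, (1 - (q ^ (k + 1))⁻¹) = (-1) ^ i * qPochC q q i / q ^ (i + 1).choose 2 := by
  induction i with
  | zero => simp [qPochC]
  | succ i ih =>
    rw [prod_range_succ, ih, qPochC, qPochC, prod_range_succ, Nat.choose_succ_succ' (i + 1),
      Nat.choose_one_right]
    field_simp
    ring

theorem prod_range_erase_one_sub_pow_div_pow {q : ℂ} (hq : q ≠ 0) {i n : ℕ} (hi : i ≤ n) :
    ∏ k ∈ (range (n + 1)).erase i, (1 - q ^ k / q ^ i) =
      (-1) ^ i * qPochC q q i * qPochC q q (n - i) / q ^ (i + 1).choose 2 := by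
  have hsplit : (range (n + 1)).erase i = range i ∪ Ico (i + 1) (n + 1) := by
    ext k
    simp only [mem_erase, mem_range, mem_union, mem_Ico]
    omega
  have hlow : ∏ k ∈ range i, (1 - q ^ k / q ^ i) = ∏ k ∈ range i, (1 - (q ^ (k + 1))⁻¹) := by
    rw [← prod_range_reflect]
    refine prod_congr rfl fun k hk => ?_
    have hqi : q ^ i = q ^ (i - 1 - k) * q ^ (k + 1) := by
      rw [← pow_add]
      have := mem_range.1 hk
      congr 1
      omega
    rw [hqi]
    field_simp
  have hhigh : ∏ k ∈ Ico (i + 1) (n + 1), (1 - q ^ k / q ^ i) = qPochC q q (n - i) := by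
    rw [prod_Ico_eq_prod_range, qPochC, show n + 1 - (i + 1) = n - i by omega]
    refine prod_congr rfl fun k _ => ?_
    rw [pow_add, pow_add]
    field_simp
  rw [hsplit, prod_union (disjoint_left.2 fun k hk hk' => by simp at hk hk'; omega), hlow, hhigh,
    prod_range_one_sub_inv_pow_succ hq]
  ring

theorem inv_prod_neg_pow_mul_nodalWeight {q : ℂ} (hq : q ≠ 0) {i n : ℕ} (hi : i ≤ n) :
    (∏ k ∈ range (n + 1), -q ^ k)⁻¹ * Lagrange.nodalWeight (range (n + 1)) (fun k => (q ^ k)⁻¹) i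
      = (-1) ^ (i + 1) * q ^ i.choose 2 / (qPochC q q i * qPochC q q (n - i)) := by
  have hfactor : ∀ k, -q ^ k * ((q ^ i)⁻¹ - (q ^ k)⁻¹) = 1 - q ^ k / q ^ i := fun k => by
    field_simp
    ring
  rw [Lagrange.nodalWeight, prod_inv_distrib, ← mul_inv,
    ← mul_prod_erase _ _ (mem_range.2 (Nat.lt_succ_of_le hi)), mul_assoc, ← prod_mul_distrib,
    prod_congr rfl fun k _ => hfactor k, prod_range_erase_one_sub_pow_div_pow hq hi,
    Nat.choose_succ_succ', Nat.choose_one_right, pow_add]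
  field_simp
  rw [← pow_add, Odd.neg_one_pow ⟨i, by ring⟩]
  ring

theorem qPochC_div_qPochC_eq_sum {q z : ℂ} {n : ℕ} (hq : q ≠ 0)
    (hinj : Set.InjOn (fun k : ℕ => (q ^ k)⁻¹) (range (n + 1)))
    (hz : ∀ k ∈ range (n + 1), z ≠ (q ^ k)⁻¹) :
    qPochC q q n / qPochC q z (n + 1) =
      ∑ k ∈ range (n + 1), (-1) ^ (k + 1) * q ^ k.choose 2 * qBinomC q n k * (z - (q ^ k)⁻¹)⁻¹ := by
  rw [qPochC_eq_mul_eval_nodal hq z, div_eq_mul_inv, mul_inv,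
    Lagrange.inv_eval_nodal_eq_sum hinj nonempty_range_add_one hz, mul_sum, mul_sum]
  refine sum_congr rfl fun k hk => ?_
  rw [← mul_assoc (∏ k ∈ range (n + 1), -q ^ k)⁻¹,
    inv_prod_neg_pow_mul_nodalWeight hq (Nat.le_of_lt_succ (mem_range.1 hk)), qBinomC]
  ring

theorem circleIntegral_sub_inv_smul_eq_zero_of_notMem {E : Type*} [NormedAddCommGroup E]
    [NormedSpace ℂ E] {R : ℝ} {c w : ℂ} {f : ℂ → E} (hR : 0 ≤ R)
    (hf : DifferentiableOn ℂ f (closedBall c R)) (hw : w ∉ closedBall c R) :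
    ∮ z in C(c, R), (z - w)⁻¹ • f z = 0 := by
  refine DiffContOnCl.circleIntegral_eq_zero hR (DifferentiableOn.diffContOnCl ?_)
  refine (((differentiableOn_id.sub_const w).inv fun z hz => ?_).smul hf).mono
    closure_ball_subset_closedBall
  exact sub_ne_zero.2 (ne_of_mem_of_not_mem hz hw)

theorem circleIntegral_sum_mul_sub_inv_mul {ι : Type*} {s : Finset ι} {a w : ι → ℂ}
    {f : ℂ → ℂ} {c : ℂ} {R : ℝ} (hR : 0 ≤ R) (hf : ContinuousOn f (sphere c R))
    (hw : ∀ i ∈ s, w i ∉ sphere c R) :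
    ∮ z in C(c, R), (∑ i ∈ s, a i * (z - w i)⁻¹) * f z =
      ∑ i ∈ s, a i * ∮ z in C(c, R), (z - w i)⁻¹ * f z := by
  simp only [sum_mul, mul_assoc]
  rw [circleIntegral.integral_fun_sum fun i hi => ?_]
  · simp only [circleIntegral.integral_const_mul]
  refine ContinuousOn.circleIntegrable hR (continuousOn_const.mul (ContinuousOn.mul ?_ hf))
  exact (continuousOn_id.sub continuousOn_const).inv₀ fun z hz =>
    sub_ne_zero.2 (ne_of_mem_of_not_mem hz (hw i hi))

theorem q_rice_formula_general (q : ℂ) (h0 : 0 < ‖q‖) (h1 : ‖q‖ < 1)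
    (n : ℕ) (f : ℂ → ℂ) (c : ℂ) (R : ℝ) (hR : 0 < R)
    (hf : DifferentiableOn ℂ f (closedBall c R))
    (hin : ∀ i ∈ Icc 1 n, q ^ (-(i : ℤ)) ∈ ball c R)
    (hout : (1 : ℂ) ∉ closedBall c R) :
    ∑ i ∈ Icc 1 n, qBinomC q n i * (-1 : ℂ) ^ (i - 1) * q ^ (i.choose 2) *
        f (q ^ (-(i : ℤ)))
      = (2 * π * Complex.I)⁻¹ *
          ∮ z in C(c, R), qPochC q q n / qPochC q z (n + 1) * f z := by
  simp only [zpow_neg, zpow_natCast] at hin ⊢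
  have hinj : Set.InjOn (fun k : ℕ => (q ^ k)⁻¹) (range (n + 1)) := fun i _ j _ h =>
    pow_right_injective₀ h0 h1.ne (by simpa using congrArg norm h)
  have hnodes : range (n + 1) = insert 0 (Icc 1 n) := by
    rw [Nat.range_succ_eq_Icc_zero]
    exact (insert_Icc_add_one_left_eq_Icc (Nat.zero_le n)).symm
  have hsphere : ∀ k ∈ range (n + 1), (q ^ k)⁻¹ ∉ sphere c R := by
    rintro k hk hks
    rcases mem_insert.1 (hnodes ▸ hk) with rfl | hk
    · exact hout (by simpa using sphere_subset_closedBall hks)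
    · exact (mem_ball.1 (hin k hk)).ne (mem_sphere.1 hks)
  have hkernel : Set.EqOn (fun z => qPochC q q n / qPochC q z (n + 1) * f z) (fun z =>
      (∑ k ∈ range (n + 1), (-1) ^ (k + 1) * q ^ k.choose 2 * qBinomC q n k * (z - (q ^ k)⁻¹)⁻¹)
        * f z) (sphere c R) := fun z hz => congrArg (· * f z) <|
    qPochC_div_qPochC_eq_sum (norm_pos_iff.1 h0) hinj fun k hk h => hsphere k hk (h ▸ hz)
  have hzero : ∮ z in C(c, R), (z - (q ^ 0)⁻¹)⁻¹ * f z = 0 := by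
    simpa using circleIntegral_sub_inv_smul_eq_zero_of_notMem hR.le hf hout
  have hcauchy : ∀ k ∈ Icc 1 n,
      ∮ z in C(c, R), (z - (q ^ k)⁻¹)⁻¹ * f z = 2 * π * Complex.I * f (q ^ k)⁻¹ := fun k hk => by
    simpa using hf.circleIntegral_sub_inv_smul (hin k hk)
  rw [circleIntegral.integral_congr hR.le hkernel, circleIntegral_sum_mul_sub_inv_mul hR.le
    (hf.continuousOn.mono sphere_subset_closedBall) hsphere, hnodes, sum_insert (by simp), hzero,
    mul_zero, zero_add, mul_sum]
  refine sum_congr rfl fun k hk => ?_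
  obtain ⟨j, rfl⟩ : ∃ j, k = j + 1 := ⟨k - 1, by grind⟩
  rw [hcauchy _ hk, Nat.add_sub_cancel]
  field_simp
  ring

/-- The `q`-Rice formula: for `0 < |q| < 1` and `f` holomorphic on a closed disc whose
interior contains the points `q^{-1}, …, q^{-n}` but which excludes `1 = q^{0}`
(so the contour encircles exactly the poles `q^{-1}, …, q^{-n}` of `1/(z;q)_{n+1}`
and no singularities of `f`),
`∑_{i=1}^n [n choose i]_q (-1)^{i-1} q^{i(i-1)/2} f(q^{-i})
  = (1/2πi) ∮_C ((q;q)_n/(z;q)_{n+1}) f(z) dz`. -/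
theorem q_rice_formula (q : ℂ) (h0 : 0 < ‖q‖) (h1 : ‖q‖ < 1)
    (n : ℕ) (hn : 1 ≤ n) (f : ℂ → ℂ) (c : ℂ) (R : ℝ) (hR : 0 < R)
    (hf : DifferentiableOn ℂ f (closedBall c R))
    (hin : ∀ i ∈ Icc 1 n, q ^ (-(i : ℤ)) ∈ ball c R)
    (hout : (1 : ℂ) ∉ closedBall c R) :
    ∑ i ∈ Icc 1 n, qBinomC q n i * (-1 : ℂ) ^ (i - 1) * q ^ (i.choose 2) *
        f (q ^ (-(i : ℤ)))
      = (2 * π * Complex.I)⁻¹ *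
          ∮ z in C(c, R), qPochC q q n / qPochC q z (n + 1) * f z :=
  q_rice_formula_general q h0 h1 n f c R hR hf hin hout
end
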